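/- arXiv:1707.00575 — 5 statements merged into one kernel-verified Lean document; each statement's English description precedes it below -/
import Mathlib

section
/- Let p(x,y) ∈ ℂ[x,y] be a homogeneous polynomial of degree d, and let n be the number of points of the projective line ℙ¹(ℂ) at which p vanishes. If n ≥ 3, then the stabilizer of p under the right action of GL₂(ℂ) on ℂ[x,y] (i.e. the group of matrices g with p∘g = p) has cardinality at most n!·d. -/
/-!
Every symmetry of `p` permutes the `n` roots of `p` in `ℙ¹`, which gives a homomorphism from
`S(p)` to the symmetric group on `V(p)`. An element of its kernel fixes at least three points
of `ℙ¹`, i.e. it has three pairwise independent eigenvectors in `ℂ²`, so it is a scalar matrix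
`c • 1`; then `p = p(c x, c y) = c ^ d p` forces `c ^ d = 1`. Hence the kernel has at most `d`
elements and `|S(p)| ≤ n! · d`.
-/

open MvPolynomial

noncomputable section

/-- The right action of a `2 × 2` matrix on polynomials in two variables by
linear substitution of the variables: `p ↦ p(a x + b y, c x + d y)`. -/
def act (M : Matrix (Fin 2) (Fin 2) ℂ) (p : MvPolynomial (Fin 2) ℂ) :
    MvPolynomial (Fin 2) ℂ :=
  bind₁ (fun i => ∑ j, M i j • X j) p

/-- The group of symmetries of `p`: the stabilizer of `p` in `GL₂(ℂ)` under the
substitution action. -/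
def Stab (p : MvPolynomial (Fin 2) ℂ) : Set (GL (Fin 2) ℂ) :=
  {g | act (↑g) p = p}

/-- The set of projective roots of `p` in `ℙ¹(ℂ)`. -/
def Vp (p : MvPolynomial (Fin 2) ℂ) : Set (Projectivization ℂ (Fin 2 → ℂ)) :=
  {x | eval x.rep p = 0}

open Matrix Projectivization
open scoped LinearAlgebra.Projectivization

theorem MonoidHom.finite_and_natCard_le_mul {G H : Type*} [Group G] [Group H] [Finite H]
    (φ : G →* H) [Finite φ.ker] : Finite G ∧ Nat.card G ≤ Nat.card φ.ker * Nat.card H := by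
  have : Finite G := φ.finite_iff_finite_ker_range.mpr ⟨inferInstance, inferInstance⟩
  refine ⟨this, ?_⟩
  rw [← φ.ker.card_mul_index, Subgroup.index_ker]
  exact Nat.mul_le_mul_left _ φ.range.card_le_card_group

theorem Module.End.eq_smul_one_of_three_eigenvectors {K V : Type*} [Field K] [AddCommGroup V]
    [Module K V] (hV : Module.finrank K V = 2) {f : Module.End K V} {u v w : V} {α β γ : K}
    (huv : LinearIndependent K ![u, v]) (huw : LinearIndependent K ![u, w])
    (hvw : LinearIndependent K ![v, w])
    (hu : f u = α • u) (hv : f v = β • v) (hw : f w = γ • w) : f = α • 1 := by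
  have hspan : Submodule.span K (Set.range ![u, v]) = ⊤ :=
    huv.span_eq_top_of_card_eq_finrank (by simp [hV])
  obtain ⟨a, b, rfl⟩ : ∃ a b : K, a • u + b • v = w := by
    rw [← Submodule.mem_span_pair, ← Matrix.range_cons_cons_empty, hspan]
    exact Submodule.mem_top
  have ha : a ≠ 0 := by
    rintro rfl
    simpa using LinearIndependent.pair_iff.mp hvw b (-1) (by simp)
  have hb : b ≠ 0 := by
    rintro rfl
    simpa using LinearIndependent.pair_iff.mp huw a (-1) (by simp)
  have hαβ : a * α = a * γ ∧ b * β = b * γ := by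
    have := LinearIndependent.pair_iff.mp huv (a * α - a * γ) (b * β - b * γ) (by
      rw [map_add, map_smul, map_smul, hu, hv] at hw
      linear_combination (norm := module) hw)
    simpa [sub_eq_zero] using this
  have hβ : β = α := by
    rw [mul_left_cancel₀ hb hαβ.2, mul_left_cancel₀ ha hαβ.1]
  refine LinearMap.ext_on_range hspan fun i => ?_
  fin_cases i <;> simp [hu, hv, hβ]

theorem MvPolynomial.IsHomogeneous.eval_smul {σ R : Type*} [CommSemiring R]
    {p : MvPolynomial σ R} {d : ℕ} (hp : p.IsHomogeneous d) (c : R) (v : σ → R) :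
    eval (c • v) p = c ^ d * eval v p := by
  rw [eval_eq, eval_eq, Finset.mul_sum]
  refine Finset.sum_congr rfl fun m hm => ?_
  have hdeg : m.degree = d := by
    by_contra h
    exact mem_support_iff.mp hm (hp.coeff_eq_zero h)
  simp only [Pi.smul_apply, smul_eq_mul, mul_pow, Finset.prod_mul_distrib,
    Finset.prod_pow_eq_pow_sum]
  rw [← hdeg, Finsupp.degree_apply]
  ring

theorem MvPolynomial.IsHomogeneous.pos_of_eval_eq_zero {σ R : Type*} [CommRing R] [IsDomain R]
    [Infinite R] {p : MvPolynomial σ R} {d : ℕ} (hp : p.IsHomogeneous d) (hp0 : p ≠ 0)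
    {v : σ → R} (hv : eval v p = 0) : 0 < d := by
  refine Nat.pos_of_ne_zero fun hd => hp0 (MvPolynomial.funext fun w => ?_)
  subst hd
  have hconst : ∀ u, eval u p = eval 0 p := fun u => by
    simpa using (hp.eval_smul 0 u).symm
  rw [map_zero, hconst, ← hconst v, hv]

section Substitution

variable (p : MvPolynomial (Fin 2) ℂ)

theorem eval_act (M : Matrix (Fin 2) (Fin 2) ℂ) (v : Fin 2 → ℂ) :
    eval v (act M p) = eval (M *ᵥ v) p := by
  refine (eval₂Hom_bind₁ _ _ _ p).trans (congrArg (eval · p) ?_)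
  funext i
  simp [mulVec, dotProduct]

theorem act_mul (M N : Matrix (Fin 2) (Fin 2) ℂ) : act (M * N) p = act N (act M p) :=
  MvPolynomial.funext fun v => by simp only [eval_act, mulVec_mulVec]

theorem act_one : act 1 p = p :=
  MvPolynomial.funext fun v => by rw [eval_act, one_mulVec]

def stabSubgroup : Subgroup (GL (Fin 2) ℂ) where
  carrier := Stab p
  one_mem' := act_one p
  mul_mem' {g h} hg hh := by
    change act _ p = p
    rw [Units.val_mul, act_mul, hg, hh]
  inv_mem' {g} hg := by
    change act _ p = p
    conv_lhs => rw [← hg, ← act_mul, ← Units.val_mul, mul_inv_cancel, Units.val_one, act_one]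

theorem pow_eq_one_of_act_smul_one {d : ℕ} (hp : p.IsHomogeneous d) (hp0 : p ≠ 0) {c : ℂ}
    (hc : act (c • 1) p = p) : c ^ d = 1 := by
  obtain ⟨v, hv⟩ : ∃ v, eval v p ≠ 0 := by
    by_contra! h
    exact hp0 (MvPolynomial.funext fun v => by simpa using h v)
  have h := eval_act p (c • 1) v
  rw [hc, smul_mulVec, one_mulVec, hp.eval_smul] at h
  exact (mul_eq_right₀ hv).mp h.symm

end Substitution

theorem Matrix.GeneralLinearGroup.exists_eq_smul_one_of_fixes_three {K : Type*} [Field K]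
    (g : GL (Fin 2) K) {x y z : ℙ K (Fin 2 → K)} (hxy : x ≠ y) (hxz : x ≠ z) (hyz : y ≠ z)
    (hx : g • x = x) (hy : g • y = y) (hz : g • z = z) :
    ∃ c : K, (g : Matrix (Fin 2) (Fin 2) K) = c • 1 := by
  have eigen : ∀ {x : ℙ K (Fin 2 → K)}, g • x = x →
      ∃ a : K, Matrix.toLin' (g : Matrix (Fin 2) (Fin 2) K) x.rep = a • x.rep := by
    intro x hx
    rw [← mk_rep x, smul_mk, mk_eq_mk_iff'] at hx
    obtain ⟨a, ha⟩ := hx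
    exact ⟨a, ha.symm⟩
  have indep : ∀ {x y : ℙ K (Fin 2 → K)}, x ≠ y →
      LinearIndependent K ![x.rep, y.rep] := by
    intro x y hxy
    have hrep : Projectivization.rep ∘ ![x, y] = ![x.rep, y.rep] := by
      ext i
      fin_cases i <;> rfl
    rw [← hrep, ← independent_iff, independent_pair_iff_ne]
    exact hxy
  obtain ⟨α, hα⟩ := eigen hx
  obtain ⟨β, hβ⟩ := eigen hy
  obtain ⟨γ, hγ⟩ := eigen hz
  refine ⟨α, Matrix.toLin'.injective ?_⟩
  rw [map_smul, Matrix.toLin'_one, ← Module.End.one_eq_id]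
  exact Module.End.eq_smul_one_of_three_eigenvectors (Module.finrank_fin_fun K)
    (indep hxy) (indep hxz) (indep hyz) hα hβ hγ

theorem mem_Vp_mk {p : MvPolynomial (Fin 2) ℂ} {d : ℕ} (hp : p.IsHomogeneous d)
    {v : Fin 2 → ℂ} (hv : v ≠ 0) : mk ℂ v hv ∈ Vp p ↔ eval v p = 0 := by
  obtain ⟨a, ha⟩ := exists_smul_eq_mk_rep ℂ v hv
  simp [Vp, ← ha, Units.smul_def, hp.eval_smul, a.ne_zero]

theorem Vp_zero : Vp 0 = Set.univ :=
  Set.eq_univ_of_forall fun _ => map_zero _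

theorem ncard_Vp_zero : (Vp 0).ncard = 0 := by
  have : Infinite (ℙ ℂ (Fin 2 → ℂ)) :=
    (OnePoint.equivProjectivization ℂ).infinite_iff.mp inferInstance
  rw [Vp_zero, Set.ncard_univ, Nat.card_eq_zero_of_infinite]

theorem smul_mem_Vp {p : MvPolynomial (Fin 2) ℂ} {d : ℕ} (hp : p.IsHomogeneous d)
    {g : GL (Fin 2) ℂ} (hg : g ∈ Stab p) {x : ℙ ℂ (Fin 2 → ℂ)} (hx : x ∈ Vp p) :
    g • x ∈ Vp p := by
  induction x using Projectivization.ind with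
  | h v hv =>
    rw [smul_mk, mem_Vp_mk hp]
    rw [mem_Vp_mk hp] at hx
    rwa [← hg, eval_act] at hx

section Roots

variable {p : MvPolynomial (Fin 2) ℂ} {d : ℕ} (hp : p.IsHomogeneous d)

def rootsSubMulAction : SubMulAction (stabSubgroup p) (ℙ ℂ (Fin 2 → ℂ)) where
  carrier := Vp p
  smul_mem' g _ hx := smul_mem_Vp hp g.2 hx

def rootsPermHom : stabSubgroup p →* Equiv.Perm (rootsSubMulAction hp) :=
  MulAction.toPermHom _ _

theorem natCard_rootsSubMulAction : Nat.card (rootsSubMulAction hp) = (Vp p).ncard :=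
  Nat.card_coe_set_eq (Vp p)

theorem coe_eq_smul_one_of_mem_ker_rootsPermHom (hp0 : p ≠ 0) (h3 : 2 < (Vp p).ncard)
    {k : stabSubgroup p} (hk : k ∈ (rootsPermHom hp).ker) :
    (k : GL (Fin 2) ℂ) = (k : GL (Fin 2) ℂ) 0 0 • (1 : Matrix (Fin 2) (Fin 2) ℂ) ∧
      ((k : GL (Fin 2) ℂ) 0 0) ^ d = 1 := by
  obtain ⟨x, y, z, hx, hy, hz, hxy, hxz, hyz⟩ :=
    (Set.two_lt_ncard_iff (Set.finite_of_ncard_ne_zero (by omega))).mp h3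
  have fixes : ∀ w ∈ Vp p, (k : GL (Fin 2) ℂ) • w = w := fun w hw =>
    congrArg Subtype.val (Equiv.ext_iff.mp (MonoidHom.mem_ker.mp hk) ⟨w, hw⟩)
  obtain ⟨c, hc⟩ := GeneralLinearGroup.exists_eq_smul_one_of_fixes_three (k : GL (Fin 2) ℂ)
    hxy hxz hyz (fixes x hx) (fixes y hy) (fixes z hz)
  have hc00 : (k : GL (Fin 2) ℂ) 0 0 = c := by simp [hc]
  rw [hc00]
  exact ⟨hc, pow_eq_one_of_act_smul_one p hp hp0 (hc ▸ k.2)⟩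

theorem finite_ker_rootsPermHom_and_natCard_le (hp0 : p ≠ 0) (hd : 0 < d)
    (h3 : 2 < (Vp p).ncard) :
    Finite (rootsPermHom hp).ker ∧ Nat.card (rootsPermHom hp).ker ≤ d := by
  have : NeZero d := ⟨hd.ne'⟩
  have scalar (k : (rootsPermHom hp).ker) :=
    coe_eq_smul_one_of_mem_ker_rootsPermHom hp hp0 h3 k.2
  let toRoots : (rootsPermHom hp).ker → rootsOfUnity d ℂ := fun k =>
    rootsOfUnity.mkOfPowEq _ (scalar k).2
  have hinj : Function.Injective toRoots := by
    intro k l hkl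
    have h00 := congrArg (fun r : rootsOfUnity d ℂ => ((r : ℂˣ) : ℂ)) hkl
    simp only [toRoots, rootsOfUnity.coe_mkOfPowEq] at h00
    ext1; ext1; apply Units.ext
    rw [(scalar k).1, (scalar l).1, h00]
  exact ⟨Finite.of_injective _ hinj,
    (Nat.card_le_card_of_injective _ hinj).trans (card_rootsOfUnity ℂ d)⟩

end Roots

theorem stmt0 (p : MvPolynomial (Fin 2) ℂ) (d : ℕ) (hp : p.IsHomogeneous d)
    (n : ℕ) (hn : n = (Vp p).ncard) (h3 : 3 ≤ n) :
    (Stab p).Finite ∧ (Stab p).ncard ≤ n.factorial * d := by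
  have hp0 : p ≠ 0 := by
    rintro rfl
    rw [ncard_Vp_zero] at hn
    omega
  obtain ⟨x, hx⟩ := Set.nonempty_of_ncard_ne_zero (s := Vp p) (by omega)
  have : Finite (rootsSubMulAction hp) :=
    (Set.finite_of_ncard_ne_zero (s := Vp p) (by omega)).to_subtype
  have hd : 0 < d := hp.pos_of_eval_eq_zero hp0 hx
  obtain ⟨hker, hker_card⟩ := finite_ker_rootsPermHom_and_natCard_le hp hp0 hd (by omega)
  obtain ⟨hfin, hcard⟩ := (rootsPermHom hp).finite_and_natCard_le_mul
  refine ⟨Set.finite_coe_iff.mp hfin, ?_⟩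
  calc (Stab p).ncard = Nat.card (stabSubgroup p) := (Nat.card_coe_set_eq _).symm
    _ ≤ Nat.card (rootsPermHom hp).ker * n.factorial := by
      rwa [Nat.card_perm, natCard_rootsSubMulAction, ← hn] at hcard
    _ ≤ d * n.factorial := Nat.mul_le_mul_right _ hker_card
    _ = n.factorial * d := mul_comm _ _
end
end

section
/- Let q > 2 be a prime power and let C ⊆ 𝔽_q^n be a linear code all of whose codewords have even weight. Let x, c ∈ C with c of weight two and support {i, j}. Then there exists λ ∈ 𝔽_q such that (x_i, x_j) = (λ c_i, λ c_j). -/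
/-!
Put `l₁ = x i / c i`, `l₂ = x j / c j` and suppose `l₁ ≠ l₂`. Since `q > 2` there is a third
scalar `μ ∉ {l₁, l₂}`. The codewords `x - l₁ • c` and `x - μ • c` agree with `x` off `{i, j}`, are
both nonzero at `j`, and differ only in whether they vanish at `i`; so their weights differ by
one and cannot both be even.
-/

open MvPolynomial
open scoped Classical

noncomputable section

/-- The Hamming weight of a vector: the number of nonzero coordinates. -/
def wt {I F : Type*} [Fintype I] [Zero F] (c : I → F) : ℕ :=
  (Finset.univ.filter fun i => c i ≠ 0).card

theorem wt_eq_wt_add_one {I F : Type*} [Fintype I] [Zero F] {y z : I → F} {i : I}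
    (hyi : y i = 0) (hzi : z i ≠ 0) (h : ∀ k, k ≠ i → (y k = 0 ↔ z k = 0)) :
    wt z = wt y + 1 := by
  have hsupp : (Finset.univ.filter fun k => z k ≠ 0)
      = insert i (Finset.univ.filter fun k => y k ≠ 0) := by
    ext k
    by_cases hki : k = i
    · subst hki; simp [hzi]
    · simp [hki, h k hki]
  rw [wt, wt, hsupp, Finset.card_insert_of_notMem (by simp [hyi])]

theorem sub_smul_apply_eq_zero_iff {I F : Type*} [Field F] {x c : I → F} {k : I}
    (hck : c k ≠ 0) (a : F) : (x - a • c) k = 0 ↔ a = x k / c k := by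
  rw [Pi.sub_apply, Pi.smul_apply, smul_eq_mul, sub_eq_zero, eq_div_iff hck, eq_comm]

theorem stmt3_general {F : Type*} [Field F] [Fintype F] (hq : 2 < Fintype.card F)
    {n : ℕ} (C : Submodule F (Fin n → F))
    (heven : ∀ c ∈ C, 2 ∣ wt c)
    (x c : Fin n → F) (hx : x ∈ C) (hc : c ∈ C)
    (i j : Fin n) (hci : c i ≠ 0) (hcj : c j ≠ 0)
    (hsupp : ∀ k, k ≠ i → k ≠ j → c k = 0) :
    ∃ l : F, x i = l * c i ∧ x j = l * c j := by
  set l₁ := x i / c i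
  set l₂ := x j / c j
  by_cases hl : l₁ = l₂
  · exact ⟨l₁, (div_mul_cancel₀ _ hci).symm, by rw [hl, div_mul_cancel₀ _ hcj]⟩
  obtain ⟨μ, hμ₁, hμ₂⟩ : ∃ μ : F, μ ≠ l₁ ∧ μ ≠ l₂ :=
    ENat.exists_ne_ne_of_three_le (by rw [ENat.card_eq_coe_fintype_card]; exact_mod_cast hq) _ _
  have hzero_iff : ∀ k, k ≠ i → ((x - l₁ • c) k = 0 ↔ (x - μ • c) k = 0) := by
    intro k hki
    by_cases hkj : k = j
    · subst hkj
      simp only [sub_smul_apply_eq_zero_iff hcj]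
      exact iff_of_false hl hμ₂
    · simp [hsupp k hki hkj]
  have hwt := wt_eq_wt_add_one ((sub_smul_apply_eq_zero_iff hci l₁).mpr rfl)
    (mt (sub_smul_apply_eq_zero_iff hci μ).mp hμ₁) hzero_iff
  have h₁ := heven _ (C.sub_mem hx (C.smul_mem l₁ hc))
  have h₂ := heven _ (C.sub_mem hx (C.smul_mem μ hc))
  omega

theorem stmt3 {F : Type*} [Field F] [Fintype F] (hq : 2 < Fintype.card F)
    {n : ℕ} (C : Submodule F (Fin n → F))
    (heven : ∀ c ∈ C, 2 ∣ wt c)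
    (x c : Fin n → F) (hx : x ∈ C) (hc : c ∈ C)
    (i j : Fin n) (hij : i ≠ j) (hci : c i ≠ 0) (hcj : c j ≠ 0)
    (hsupp : ∀ k, k ≠ i → k ≠ j → c k = 0) :
    ∃ l : F, x i = l * c i ∧ x j = l * c j :=
  stmt3_general hq C heven x c hx hc i j hci hcj hsupp
end
end

section
/- Let q ≠ 2 be a prime power and C ⊆ 𝔽_q^n a linear code of even length n whose weight enumerator equals (x² + a y²)^{n/2} for some nonzero real a. Then a = q−1 and C is monomially equivalent to the direct sum of n/2 copies of the code ⟨(1,1)⟩ ⊆ 𝔽_q². -/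
/-!
Put `x = 1`: the polynomial `∑_{c ∈ C} y^{wt c}` equals `(1 + a y²)^m`. Its value and derivative
at `y = 1` give `|C| = (1 + a)^m` and `∑_c wt c = 2m a (1 + a)^{m-1}`, and its top coefficient
`a^m ≠ 0` provides a codeword of full weight. Hence every coordinate map `C → 𝔽_q` is onto, each
coordinate is nonzero on a fraction `(q - 1)/q` of `C`, and `∑_c wt c = 2m (q - 1) |C| / q`;
comparing gives `a = q - 1` and `|C| = q^m`.

Now `C` has no words of weight 1 or 3 and `m (q - 1)` words of weight 2. Two weight-2 words with
overlapping but different supports combine (as `q > 2`) into a word of weight 3, and two with the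
same support are proportional since there is no word of weight 1. So the weight-2 supports are `m`
disjoint pairs, which partition the `2m` coordinates. Rescaled and permuted, one weight-2 word per
pair becomes a generator of the pair code, so the image of `C` contains the `m`-dimensional pair
code and, being `m`-dimensional itself, equals it.
-/
open MvPolynomial
open scoped Classical

noncomputable section

/-- The weight enumerator `w_C(x, y) = ∑_{c ∈ C} x^(n - wt c) * y^(wt c)` of a code
`C ⊆ F^n`, viewed as a complex polynomial in the two variables `X 0`, `X 1`. -/
def we {F : Type*} [Fintype F] [Field F] {n : ℕ} (C : Set (Fin n → F)) :
    MvPolynomial (Fin 2) ℂ :=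
  ∑ c : C, X 0 ^ (n - wt c.1) * X 1 ^ wt c.1

/-- The direct sum of `m` copies of the code `⟨(1,1)⟩ ⊆ F²`, realized inside
`F^(2m)` as the span of the vectors `e_{2k} + e_{2k+1}`, `k = 0, …, m-1`. -/
def pairCode (F : Type*) [Field F] (m : ℕ) : Submodule F (Fin (2 * m) → F) :=
  Submodule.span F (Set.range fun k : Fin m =>
    (Pi.single (⟨2 * (k : ℕ), by omega⟩ : Fin (2 * m)) 1 +
      Pi.single (⟨2 * (k : ℕ) + 1, by omega⟩ : Fin (2 * m)) (1 : F)))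

open Finset

namespace Polynomial

variable {R ι : Type*} [CommSemiring R] [Fintype ι]

theorem coeff_sum_X_pow (f : ι → ℕ) (k : ℕ) :
    (∑ i, (X : R[X]) ^ f i).coeff k = #{i | f i = k} := by
  simp [coeff_X_pow, eq_comm, Finset.sum_boole]

theorem eval_one_sum_X_pow (f : ι → ℕ) : (∑ i, (X : R[X]) ^ f i).eval 1 = Fintype.card ι := by
  simp [eval_finsetSum]

theorem eval_one_derivative_sum_X_pow (f : ι → ℕ) :
    (derivative (∑ i, (X : R[X]) ^ f i)).eval 1 = ∑ i, (f i : R) := by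
  simp [eval_finsetSum, derivative_X_pow]

theorem coeff_one_add_C_mul_X_sq_pow (a : R) (m k : ℕ) :
    ((1 + C a * X ^ 2) ^ m).coeff k = if 2 ∣ k then m.choose (k / 2) * a ^ (k / 2) else 0 := by
  have : (1 + C a * X ^ 2) ^ m = expand R 2 (((1 + X) ^ m).comp (C a * X)) := by simp
  rw [this, coeff_expand two_pos, comp_C_mul_X_coeff, coeff_one_add_X_pow]

theorem eval_one_derivative_one_add_C_mul_X_sq_pow (a : R) (m : ℕ) :
    (derivative ((1 + C a * X ^ 2) ^ m)).eval 1 = m * (1 + a) ^ (m - 1) * (2 * a) := by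
  simp [derivative_pow]
  ring

end Polynomial

section Support

variable {F ι : Type*} [Zero F] [Fintype ι]

def supp (v : ι → F) : Finset ι := {i | v i ≠ 0}

@[simp] theorem mem_supp {v : ι → F} {i : ι} : i ∈ supp v ↔ v i ≠ 0 := by simp [supp]

theorem card_supp (v : ι → F) : #(supp v) = wt v := rfl

theorem wt_pos {v : ι → F} (hv : v ≠ 0) : 0 < wt v := by
  obtain ⟨i, hi⟩ := Function.ne_iff.1 hv
  exact Finset.card_pos.2 ⟨i, by simpa using hi⟩

theorem wt_eq_card_iff {v : ι → F} : wt v = Fintype.card ι ↔ ∀ i, v i ≠ 0 := by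
  rw [wt, ← Finset.card_univ, Finset.card_filter_eq_iff]
  simp

theorem supp_smul {F : Type*} [Field F] {v : ι → F} {l : F} (hl : l ≠ 0) :
    supp (l • v) = supp v := by
  ext i
  simp [hl]

end Support

section CoordinateCount

variable {F ι : Type*} [Field F] [Fintype F] [Fintype ι] [DecidableEq ι] {C : Submodule F (ι → F)}

theorem card_mul_card_coord_ne_zero {i : ι} {w : ι → F} (hw : w ∈ C) (hwi : w i ≠ 0) :
    Fintype.card F * #{c : C | (c : ι → F) i ≠ 0} = (Fintype.card F - 1) * Fintype.card C := by
  let π : C →+ F := (LinearMap.proj i ∘ₗ C.subtype).toAddMonoidHom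
  have hπ : ∀ x, x ∈ Set.range π := fun x =>
    ⟨(x / w i) • ⟨w, hw⟩, by simp [π, div_mul_cancel₀ _ hwi]⟩
  set N := #{c : C | π c = 0}
  have hfiber : ∀ x, #{c : C | π c = x} = N := fun x =>
    AddMonoidHom.card_fiber_eq_of_mem_range π (hπ x) (hπ 0)
  have hcard : Fintype.card C = Fintype.card F * N := by
    rw [← Finset.card_univ, Finset.card_eq_sum_card_fiberwise (f := π) (t := univ) (by simp)]
    simp [hfiber]
  have hsplit : N + #{c : C | (c : ι → F) i ≠ 0} = Fintype.card C :=
    Finset.card_filter_add_card_filter_not _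
  have : #{c : C | (c : ι → F) i ≠ 0} = (Fintype.card F - 1) * N := by
    rw [Nat.sub_one_mul]
    omega
  rw [this, hcard]
  ring

theorem card_mul_sum_wt (hC : ∀ i, ∃ w ∈ C, w i ≠ 0) :
    Fintype.card F * ∑ c : C, wt (c : ι → F)
      = Fintype.card ι * ((Fintype.card F - 1) * Fintype.card C) := by
  have hswap : ∑ c : C, wt (c : ι → F) = ∑ i, #{c : C | (c : ι → F) i ≠ 0} := by
    simp only [wt, Finset.card_filter]
    exact Finset.sum_comm
  have hcoord : ∀ i, Fintype.card F * #{c : C | (c : ι → F) i ≠ 0}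
      = (Fintype.card F - 1) * Fintype.card C := fun i => by
    obtain ⟨w, hw, hwi⟩ := hC i
    exact card_mul_card_coord_ne_zero hw hwi
  simp [hswap, Finset.mul_sum, hcoord]

end CoordinateCount

theorem Finset.exists_mem_notMem_of_ne_of_card_le {α : Type*} {s t : Finset α} (hst : s ≠ t)
    (h : #t ≤ #s) : ∃ j ∈ s, j ∉ t := by
  by_contra! hsub
  exact hst (Finset.eq_of_subset_of_card_le hsub h)

section WeightTwo

variable {F ι : Type*} [Field F] [Fintype ι] {C : Submodule F (ι → F)}

theorem eq_smul_of_supp_eq {c d : ι → F} (hc : c ∈ C) (hd : d ∈ C)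
    (hmin : ∀ v ∈ C, v ≠ 0 → wt c ≤ wt v) (hsupp : supp d = supp c) {i : ι} (hi : c i ≠ 0) :
    d = (d i / c i) • c := by
  set e := d - (d i / c i) • c
  have hsub : supp e ⊆ (supp c).erase i := by
    intro j hj
    have hdj : c j = 0 → d j = 0 := fun hcj => by
      by_contra h
      exact mem_supp.1 (hsupp ▸ mem_supp.2 h) hcj
    simp only [mem_supp, Finset.mem_erase] at hj ⊢
    refine ⟨?_, fun hcj => hj ?_⟩
    · rintro rfl
      apply hj
      simp [e, div_mul_cancel₀ _ hi]
    · simp [e, hcj, hdj hcj]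
  have hlt : wt e < wt c :=
    (Finset.card_le_card hsub).trans_lt (Finset.card_erase_lt_of_mem (mem_supp.2 hi))
  have he : e = 0 := by
    by_contra h
    exact (hmin e (C.sub_mem hd (C.smul_mem _ hc)) h).not_gt hlt
  exact sub_eq_zero.1 he

variable [Fintype F]

theorem supp_eq_or_disjoint (hq : 2 < Fintype.card F) (h3 : ∀ v ∈ C, wt v ≠ 3) {c d : ι → F}
    (hc : c ∈ C) (hd : d ∈ C) (hc2 : wt c = 2) (hd2 : wt d = 2) :
    supp c = supp d ∨ Disjoint (supp c) (supp d) := by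
  refine or_iff_not_imp_left.2 fun hne => Finset.disjoint_left.2 fun i hic hid => ?_
  obtain ⟨j, hjc, hjd⟩ :=
    Finset.exists_mem_notMem_of_ne_of_card_le hne (by rw [card_supp, card_supp, hc2, hd2])
  obtain ⟨k, hkd, hkc⟩ :=
    Finset.exists_mem_notMem_of_ne_of_card_le (Ne.symm hne) (by rw [card_supp, card_supp, hc2, hd2])
  simp only [mem_supp, not_not] at hic hid hjc hjd hkd hkc
  -- `q > 2` leaves room for `μ ∉ {0, -c i / d i}`, so `c + μ • d` has support `{i, j, k}`
  obtain ⟨μ, -, hμ⟩ := Finset.exists_mem_notMem_of_card_lt_card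
    (s := {0, -c i / d i}) (t := univ) ((Finset.card_le_two).trans_lt hq)
  simp only [Finset.mem_insert, Finset.mem_singleton, not_or] at hμ
  set e := c + μ • d
  have hijk : {i, j, k} ⊆ supp e := by
    intro l hl
    simp only [Finset.mem_insert, Finset.mem_singleton] at hl
    rcases hl with rfl | rfl | rfl <;>
      simp only [mem_supp, e, Pi.add_apply, Pi.smul_apply, smul_eq_mul]
    · intro h
      exact hμ.2 (by field_simp; linear_combination h)
    · simpa [hjd] using hjc
    · simpa [hkc] using ⟨hμ.1, hkd⟩
  have hcd : supp e ⊆ supp c ∪ supp d := by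
    intro l
    simp only [mem_supp, Finset.mem_union, e, Pi.add_apply, Pi.smul_apply, smul_eq_mul]
    contrapose!
    rintro ⟨hcl, hdl⟩
    simp [hcl, hdl]
  have hunion : #(supp c ∪ supp d) ≤ 3 := by
    have := Finset.card_union_add_card_inter (supp c) (supp d)
    have : 0 < #(supp c ∩ supp d) := Finset.card_pos.2 ⟨i, by simp [hic, hid]⟩
    rw [card_supp, card_supp] at *
    omega
  have hthree : #({i, j, k} : Finset ι) = 3 := Finset.card_eq_three.2
    ⟨i, j, k, by rintro rfl; exact hid hjd, by rintro rfl; exact hic hkc,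
      by rintro rfl; exact hkd hjd, rfl⟩
  refine h3 e (C.add_mem hc (C.smul_mem μ hd)) (le_antisymm ?_ ?_)
  · exact (Finset.card_le_card hcd).trans hunion
  · exact hthree ▸ Finset.card_le_card hijk

end WeightTwo

section Partition

variable {F ι : Type*} [Field F] [Fintype ι]

theorem exists_block_map {m : ℕ} (hι : Fintype.card ι = 2 * m) (c : Fin m → ι → F)
    (hc2 : ∀ k, wt (c k) = 2) (hdisj : Pairwise fun k l => Disjoint (supp (c k)) (supp (c l))) :
    ∃ f : ι → Fin m, ∀ k i, c k i ≠ 0 ↔ f i = k := by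
  have hcover : univ.biUnion (fun k => supp (c k)) = univ := by
    refine Finset.eq_univ_of_card _ ?_
    rw [Finset.card_biUnion (hdisj.set_pairwise _)]
    simp [card_supp, hc2, hι, mul_comm]
  have : ∀ i, ∃ k, c k i ≠ 0 := fun i => by
    have hi := Finset.mem_univ i
    rw [← hcover] at hi
    simpa using hi
  choose f hf using this
  refine ⟨f, fun k i => ⟨fun hki => ?_, fun hfi => hfi ▸ hf i⟩⟩
  by_contra hne
  exact Finset.disjoint_left.1 (hdisj hne) (mem_supp.2 (hf i)) (mem_supp.2 hki)

variable [Fintype F] [DecidableEq ι] {C : Submodule F (ι → F)}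

theorem card_filter_supp_eq (hmin : ∀ v ∈ C, v ≠ 0 → 2 ≤ wt v) {v : C}
    (hv : wt (v : ι → F) = 2) :
    #{c ∈ ({c : C | wt (c : ι → F) = 2} : Finset C) | supp c.1 = supp v.1}
      = Fintype.card F - 1 := by
  have hv0 : v ≠ 0 := fun h => by simp [h, wt] at hv
  obtain ⟨i, hi⟩ := Finset.card_pos.1 (by rw [card_supp, hv]; norm_num : 0 < #(supp (v : ι → F)))
  have hclass : {c ∈ ({c : C | wt (c : ι → F) = 2} : Finset C) | supp c.1 = supp v.1}
      = (univ.erase 0).image fun l : F => l • v := by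
    ext w
    simp only [Finset.mem_filter, Finset.mem_univ, true_and, Finset.mem_image, Finset.mem_erase,
      and_true]
    constructor
    · rintro ⟨-, hw⟩
      have hvi : (v : ι → F) i ≠ 0 := mem_supp.1 hi
      refine ⟨(w : ι → F) i / (v : ι → F) i, ?_, Subtype.ext ?_⟩
      · exact div_ne_zero (mem_supp.1 (hw ▸ hi)) hvi
      · exact (eq_smul_of_supp_eq v.2 w.2 (fun u hu hu0 => hv ▸ hmin u hu hu0) hw hvi).symm
    · rintro ⟨l, hl, rfl⟩
      simp only [Submodule.coe_smul, supp_smul hl, and_true]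
      rw [← card_supp, supp_smul hl, card_supp, hv]
  rw [hclass, Finset.card_image_of_injective _ (smul_left_injective F hv0),
    Finset.card_erase_of_mem (Finset.mem_univ _), Finset.card_univ]

theorem card_filter_wt_eq_two (hmin : ∀ v ∈ C, v ≠ 0 → 2 ≤ wt v) :
    #{c : C | wt (c : ι → F) = 2}
      = #(({c : C | wt (c : ι → F) = 2} : Finset C).image fun c => supp c.1)
        * (Fintype.card F - 1) := by
  rw [Finset.card_eq_sum_card_image (fun c : C => supp c.1), ← smul_eq_mul, ← Finset.sum_const]
  refine Finset.sum_congr rfl fun s hs => ?_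
  obtain ⟨v, hv, rfl⟩ := Finset.mem_image.1 hs
  exact card_filter_supp_eq hmin (by simpa using hv)

theorem exists_pairwise_disjoint_supp (hq : 2 < Fintype.card F) (h1 : ∀ v ∈ C, wt v ≠ 1)
    (h3 : ∀ v ∈ C, wt v ≠ 3) {m : ℕ}
    (hW2 : #{c : C | wt (c : ι → F) = 2} = m * (Fintype.card F - 1)) :
    ∃ c : Fin m → ι → F, (∀ k, c k ∈ C ∧ wt (c k) = 2) ∧
      Pairwise fun k l => Disjoint (supp (c k)) (supp (c l)) := by
  have hmin : ∀ v ∈ C, v ≠ 0 → 2 ≤ wt v := fun v hv hv0 => by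
    have := wt_pos hv0
    have := h1 v hv
    omega
  set S := ({c : C | wt (c : ι → F) = 2} : Finset C).image fun c => supp c.1
  have hS : #S = m :=
    Nat.eq_of_mul_eq_mul_right (by omega) ((card_filter_wt_eq_two hmin).symm.trans hW2)
  let e := (S.equivFinOfCardEq hS).symm
  choose v hv hve using fun k => Finset.mem_image.1 (e k).2
  have hv2 : ∀ k, wt (v k).1 = 2 := fun k => (Finset.mem_filter.1 (hv k)).2
  refine ⟨fun k => v k, fun k => ⟨(v k).2, hv2 k⟩, fun k l hkl => ?_⟩
  refine (supp_eq_or_disjoint hq h3 (v k).2 (v l).2 (hv2 k) (hv2 l)).resolve_left fun h => ?_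
  exact hkl (e.injective (Subtype.ext ((hve k).symm.trans (h.trans (hve l)))))

end Partition

section PairCode

variable {F : Type*} [Field F] {m : ℕ}

def pairIndex (i : Fin (2 * m)) : Fin m := ⟨i / 2, by omega⟩

theorem card_pairIndex_eq (k : Fin m) : #{i : Fin (2 * m) | pairIndex i = k} = 2 := by
  rw [Finset.card_eq_two]
  refine ⟨⟨2 * k, by omega⟩, ⟨2 * k + 1, by omega⟩, by simp [Fin.ext_iff], ?_⟩
  ext i
  simp only [pairIndex, Finset.mem_filter, Finset.mem_univ, true_and, Finset.mem_insert,
    Finset.mem_singleton, Fin.ext_iff]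
  omega

theorem pairCode_eq_span : pairCode F m = Submodule.span F
    (Set.range fun k (i : Fin (2 * m)) => if pairIndex i = k then (1 : F) else 0) := by
  unfold pairCode
  congr
  ext k i
  simp only [Pi.add_apply, Pi.single_apply, pairIndex, Fin.ext_iff]
  split_ifs <;> first | omega | simp

theorem finrank_pairCode : Module.finrank F (pairCode F m) = m := by
  rw [pairCode_eq_span, finrank_span_eq_card, Fintype.card_fin]
  refine LinearIndependent.of_comp
    (LinearMap.funLeft F F fun k : Fin m => (⟨2 * k, by omega⟩ : Fin (2 * m))) ?_
  convert Pi.linearIndependent_single_one (Fin m) F with k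
  ext l
  simp [Pi.single_apply, pairIndex, Fin.ext_iff, eq_comm]

theorem exists_monomial_equiv_pairCode {C : Submodule F (Fin (2 * m) → F)}
    (hC : Module.finrank F C ≤ m) (c : Fin m → Fin (2 * m) → F) (hcC : ∀ k, c k ∈ C)
    (hc2 : ∀ k, wt (c k) = 2) (f : Fin (2 * m) → Fin m) (hc : ∀ k i, c k i ≠ 0 ↔ f i = k) :
    ∃ (σ : Equiv.Perm (Fin (2 * m))) (u : Fin (2 * m) → F), (∀ i, u i ≠ 0) ∧
      ∀ v : Fin (2 * m) → F, v ∈ C ↔ (fun i => u i * v (σ i)) ∈ pairCode F m := by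
  have hf : ∀ k, #{i | f i = k} = 2 := fun k => by
    have hfk : ({i | f i = k} : Finset _) = supp (c k) := by
      ext i
      simp [hc]
    rw [hfk, card_supp, hc2]
  let σ : Equiv.Perm (Fin (2 * m)) := Equiv.ofFiberEquiv (f := pairIndex) (g := f) fun k =>
    Fintype.equivOfCardEq (by simp only [Fintype.card_subtype, card_pairIndex_eq, hf])
  have hσ : ∀ i, f (σ i) = pairIndex i := Equiv.ofFiberEquiv_map _
  let u i := (c (pairIndex i) (σ i))⁻¹
  have hu : ∀ i, u i ≠ 0 := fun i => inv_ne_zero ((hc _ _).2 (hσ i))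
  let φ : (Fin (2 * m) → F) →ₗ[F] (Fin (2 * m) → F) :=
    { toFun v i := u i * v (σ i)
      map_add' _ _ := by ext; simp [mul_add]
      map_smul' _ _ := by ext; simp [mul_left_comm] }
  have hφ : Function.Injective φ := fun v w h => funext fun j => by
    obtain ⟨i, rfl⟩ := σ.surjective j
    simpa [φ, hu i] using congrFun h i
  have hφc : ∀ k, φ (c k) = fun i => if pairIndex i = k then 1 else 0 := fun k => by
    ext i
    simp only [φ, LinearMap.coe_mk, AddHom.coe_mk]
    split_ifs with h
    · subst h
      exact inv_mul_cancel₀ ((hc _ _).2 (hσ i))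
    · rw [not_not.1 (mt (hc k (σ i)).1 (hσ i ▸ h)), mul_zero]
  have hmap : pairCode F m = C.map φ := by
    refine Submodule.eq_of_le_of_finrank_le ?_ ?_
    · rw [pairCode_eq_span, Submodule.span_le]
      rintro _ ⟨k, rfl⟩
      exact ⟨c k, hcC k, hφc k⟩
    · rw [finrank_pairCode]
      exact (Submodule.finrank_map_le φ C).trans hC
  refine ⟨σ, u, hu, fun v => ?_⟩
  rw [hmap]
  exact hφ.mem_set_image.symm

end PairCode

section WeightEnumerator

variable {F : Type*} [Field F] [Fintype F]

def wtPoly {n : ℕ} (C : Submodule F (Fin n → F)) : Polynomial ℂ :=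
  ∑ c : C, Polynomial.X ^ wt c.1

theorem aeval_we {n : ℕ} (C : Submodule F (Fin n → F)) :
    aeval ![1, Polynomial.X] (we (C : Set (Fin n → F))) = wtPoly C := by
  simp [we, wtPoly]

variable {m : ℕ} {C : Submodule F (Fin (2 * m) → F)} {a : ℂ}

theorem card_filter_wt_eq (hP : wtPoly C = (1 + Polynomial.C a * Polynomial.X ^ 2) ^ m) (k : ℕ) :
    (#{c : C | wt c.1 = k} : ℂ) = if 2 ∣ k then m.choose (k / 2) * a ^ (k / 2) else 0 := by
  rw [← Polynomial.coeff_sum_X_pow, ← wtPoly, hP, Polynomial.coeff_one_add_C_mul_X_sq_pow]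

theorem two_dvd_wt (hP : wtPoly C = (1 + Polynomial.C a * Polynomial.X ^ 2) ^ m)
    {v : Fin (2 * m) → F} (hv : v ∈ C) : 2 ∣ wt v := by
  by_contra h
  have hk := card_filter_wt_eq hP (wt v)
  rw [if_neg h, Nat.cast_eq_zero, Finset.card_eq_zero] at hk
  exact Finset.eq_empty_iff_forall_notMem.1 hk ⟨v, hv⟩ (by simp)

theorem exists_mem_forall_ne_zero (hP : wtPoly C = (1 + Polynomial.C a * Polynomial.X ^ 2) ^ m)
    (ha : a ≠ 0) : ∃ w ∈ C, ∀ i, w i ≠ 0 := by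
  have hk := card_filter_wt_eq hP (2 * m)
  simp only [dvd_mul_right, if_true, Nat.mul_div_cancel_left _ two_pos, Nat.choose_self,
    Nat.cast_one, one_mul] at hk
  have hpos : #{c : C | wt c.1 = 2 * m} ≠ 0 := fun h => by
    rw [h, Nat.cast_zero] at hk
    exact pow_ne_zero m ha hk.symm
  obtain ⟨w, hw⟩ := Finset.card_pos.1 (Nat.pos_of_ne_zero hpos)
  exact ⟨w.1, w.2, wt_eq_card_iff.1 (by simpa using hw)⟩

theorem eq_card_sub_one (hP : wtPoly C = (1 + Polynomial.C a * Polynomial.X ^ 2) ^ m)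
    (hm : 0 < m) (ha : a ≠ 0) : a = Fintype.card F - 1 := by
  have hcard : (Fintype.card C : ℂ) = (1 + a) ^ m := by
    rw [← Polynomial.eval_one_sum_X_pow, ← wtPoly, hP]
    simp
  have hsum : (∑ c : C, (wt c.1 : ℂ)) = m * (1 + a) ^ (m - 1) * (2 * a) := by
    rw [← Polynomial.eval_one_derivative_sum_X_pow, ← wtPoly, hP,
      Polynomial.eval_one_derivative_one_add_C_mul_X_sq_pow]
  obtain ⟨w, hw, hwi⟩ := exists_mem_forall_ne_zero hP ha
  have hcount := congrArg (Nat.cast : ℕ → ℂ) (card_mul_sum_wt (C := C) fun i => ⟨w, hw, hwi i⟩)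
  push_cast [Nat.cast_sub Fintype.card_pos, Fintype.card_fin] at hcount
  have hpow : (1 + a) ^ m = (1 + a) ^ (m - 1) * (1 + a) := by
    rw [← pow_succ, Nat.sub_add_cancel hm]
  rw [hsum, hcard, hpow] at hcount
  have h1a : 1 + a ≠ 0 := fun h => Fintype.card_ne_zero (α := C) (by
    rw [hpow, h, mul_zero] at hcard
    exact_mod_cast hcard)
  have hne : 2 * (m : ℂ) * (1 + a) ^ (m - 1) ≠ 0 := by
    simp [h1a, hm.ne']
  refine mul_left_cancel₀ hne ?_
  linear_combination hcount

end WeightEnumerator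

theorem stmt5 {F : Type*} [Field F] [Fintype F] (hq : 2 < Fintype.card F)
    (m : ℕ) (hm : 0 < m) (C : Submodule F (Fin (2 * m) → F))
    (a : ℝ) (ha : a ≠ 0)
    (hW : we (C : Set (Fin (2 * m) → F)) =
      (X 0 ^ 2 + MvPolynomial.C (a : ℂ) * X 1 ^ 2) ^ m) :
    a = (Fintype.card F : ℝ) - 1 ∧
    ∃ (σ : Equiv.Perm (Fin (2 * m))) (u : Fin (2 * m) → F), (∀ i, u i ≠ 0) ∧
      ∀ v : Fin (2 * m) → F, v ∈ C ↔ (fun i => u i * v (σ i)) ∈ pairCode F m := by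
  have hP : wtPoly C = (1 + Polynomial.C (a : ℂ) * Polynomial.X ^ 2) ^ m := by
    rw [← aeval_we]
    simpa [Polynomial.algebraMap_eq] using congrArg (aeval ![(1 : Polynomial ℂ), Polynomial.X]) hW
  have ha' : (a : ℂ) = Fintype.card F - 1 := eq_card_sub_one hP hm (by exact_mod_cast ha)
  refine ⟨by exact_mod_cast ha', ?_⟩
  have hcard : Fintype.card C = Fintype.card F ^ m := by
    have h : (Fintype.card C : ℂ) = (Fintype.card F ^ m : ℕ) := by
      rw [← Polynomial.eval_one_sum_X_pow, ← wtPoly, hP, ha']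
      simp
    exact_mod_cast h
  have hdim : Module.finrank F C ≤ m :=
    (Nat.pow_right_injective hq.le (Module.card_eq_pow_finrank.symm.trans hcard)).le
  have hW2 : #{c : C | wt c.1 = 2} = m * (Fintype.card F - 1) := by
    have h : (#{c : C | wt c.1 = 2} : ℂ) = (m * (Fintype.card F - 1) : ℕ) := by
      rw [card_filter_wt_eq hP 2, ha', Nat.cast_mul, Nat.cast_sub (by omega)]
      simp
    exact_mod_cast h
  have hodd : ∀ k, ¬ 2 ∣ k → ∀ v ∈ C, wt v ≠ k := fun k hk v hv h => hk (h ▸ two_dvd_wt hP hv)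
  obtain ⟨c, hc, hdisj⟩ :=
    exists_pairwise_disjoint_supp hq (hodd 1 (by decide)) (hodd 3 (by decide)) hW2
  obtain ⟨f, hf⟩ := exists_block_map (by simp) c (fun k => (hc k).2) hdisj
  exact exists_monomial_equiv_pairCode hdim c (fun k => (hc k).1) (fun k => (hc k).2) f hf
end
end

section
/- Let Z ⊆ ℂ ∪ {∞} = ℙ¹(ℂ) with #Z ≥ 5 and suppose z₁, z₂, z₃, z₄, z₅ ∈ Z are distinct points such that both (z₁,z₂,z₃,z₄) and (z₁,z₂,z₃,z₅) are critical 4-tuples of Z. Then any element of PGL₂(ℂ) mapping Z bijectively to itself is the identity. -/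
/-!
A Möbius map `g` preserving `Z` preserves cross ratios, so criticality forces
`(g z₁, g z₂, g z₃, g z₄)` to be a `V₄`-permutation of `(z₁, z₂, z₃, z₄)` and
`(g z₁, g z₂, g z₃, g z₅)` one of `(z₁, z₂, z₃, z₅)`. As `z₄ ≠ z₅`, the only choice
compatible with both is the identity, so `g` fixes `z₁, z₂, z₃`. The fixed points of
`z ↦ (a z + b) / (c z + d)` are the roots of `c z² + (d - a) z - b`, so three of them force `g`
to be scalar.
-/

noncomputable section

/-- The cross ratio of four complex points. -/
def crossRatio (z₁ z₂ z₃ z₄ : ℂ) : ℂ :=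
  ((z₁ - z₃) * (z₂ - z₄)) / ((z₁ - z₄) * (z₂ - z₃))

/-- A 4-tuple of distinct elements of `Z` is critical if any 4-tuple of distinct
elements of `Z` with the same cross ratio is obtained from it by a permutation in
the Klein four-group `V₄ = {id, (12)(34), (13)(24), (14)(23)}`. -/
def IsCritical (Z : Set ℂ) (z₁ z₂ z₃ z₄ : ℂ) : Prop :=
  z₁ ∈ Z ∧ z₂ ∈ Z ∧ z₃ ∈ Z ∧ z₄ ∈ Z ∧
  [z₁, z₂, z₃, z₄].Pairwise (· ≠ ·) ∧
  ∀ y₁ y₂ y₃ y₄ : ℂ, y₁ ∈ Z → y₂ ∈ Z → y₃ ∈ Z → y₄ ∈ Z →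
    [y₁, y₂, y₃, y₄].Pairwise (· ≠ ·) →
    (crossRatio y₁ y₂ y₃ y₄ = crossRatio z₁ z₂ z₃ z₄ ↔
      (y₁, y₂, y₃, y₄) = (z₁, z₂, z₃, z₄) ∨
      (y₁, y₂, y₃, y₄) = (z₂, z₁, z₄, z₃) ∨
      (y₁, y₂, y₃, y₄) = (z₃, z₄, z₁, z₂) ∨
      (y₁, y₂, y₃, y₄) = (z₄, z₃, z₂, z₁))

/-- The embedding `ℂ ↪ ℙ¹(ℂ)`, `z ↦ (z : 1)`. -/
def toP1 (z : ℂ) : Projectivization ℂ (Fin 2 → ℂ) :=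
  Projectivization.mk ℂ ![z, 1] (by
    intro h
    have := congrFun h 1
    simp at this)

/-- The action of `GL₂(ℂ)` on `ℙ¹(ℂ)` (which factors through `PGL₂(ℂ)`). -/
def pact (g : GL (Fin 2) ℂ) (x : Projectivization ℂ (Fin 2 → ℂ)) :
    Projectivization ℂ (Fin 2 → ℂ) :=
  Projectivization.mk ℂ ((g : Matrix (Fin 2) (Fin 2) ℂ).mulVec x.rep) (by
    intro h
    apply x.rep_nonzero
    have h2 := congrArg
      (fun v => ((g⁻¹ : GL (Fin 2) ℂ) : Matrix (Fin 2) (Fin 2) ℂ).mulVec v) h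
    simp only [Matrix.mulVec_mulVec, Matrix.mulVec_zero] at h2
    rwa [show ((g⁻¹ : GL (Fin 2) ℂ) : Matrix (Fin 2) (Fin 2) ℂ) * ↑g = 1 from Units.inv_mul g,
      Matrix.one_mulVec] at h2)

/-- `z ↦ (a z + b) / (c z + d)` for `M = !![a, b; c, d]`; at the pole `c z + d = 0` it takes the
junk value `0` instead of `∞`. -/
def mobius (M : Matrix (Fin 2) (Fin 2) ℂ) (z : ℂ) : ℂ :=
  (M 0 0 * z + M 0 1) / (M 1 0 * z + M 1 1)

def kleinOrbit {α : Type*} (a b c d : α) : Set (α × α × α × α) :=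
  {(a, b, c, d), (b, a, d, c), (c, d, a, b), (d, c, b, a)}

lemma eq_of_mem_kleinOrbit_of_mem_kleinOrbit {α : Type*} {z₁ z₂ z₃ z₄ z₅ w₁ w₂ w₃ w₄ w₅ : α}
    (hd : [z₁, z₂, z₃, z₄, z₅].Pairwise (· ≠ ·))
    (h₄ : (w₁, w₂, w₃, w₄) ∈ kleinOrbit z₁ z₂ z₃ z₄)
    (h₅ : (w₁, w₂, w₃, w₅) ∈ kleinOrbit z₁ z₂ z₃ z₅) :
    w₁ = z₁ ∧ w₂ = z₂ ∧ w₃ = z₃ := by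
  simp only [List.pairwise_cons, List.mem_cons, List.not_mem_nil, or_false, forall_eq_or_imp,
    forall_eq, List.Pairwise.nil, and_true] at hd
  simp only [kleinOrbit, Set.mem_insert_iff, Set.mem_singleton_iff, Prod.mk.injEq] at h₄ h₅
  rcases h₄ with ⟨rfl, rfl, rfl, rfl⟩ | ⟨rfl, rfl, rfl, rfl⟩ | ⟨rfl, rfl, rfl, rfl⟩ |
    ⟨rfl, rfl, rfl, rfl⟩ <;> simp_all

section Mobius

variable {M : Matrix (Fin 2) (Fin 2) ℂ}

lemma mobius_sub_mobius {z w : ℂ} (hz : M 1 0 * z + M 1 1 ≠ 0) (hw : M 1 0 * w + M 1 1 ≠ 0) :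
    mobius M z - mobius M w =
      M.det * (z - w) / ((M 1 0 * z + M 1 1) * (M 1 0 * w + M 1 1)) := by
  rw [mobius, mobius, div_sub_div _ _ hz hw, Matrix.det_fin_two]
  ring_nf

lemma mobius_injOn (hM : M.det ≠ 0) : Set.InjOn (mobius M) {z | M 1 0 * z + M 1 1 ≠ 0} := by
  intro z (hz : _ ≠ 0) w (hw : _ ≠ 0) h
  rw [← sub_eq_zero, mobius_sub_mobius hz hw] at h
  simpa [hM, hz, hw, sub_eq_zero] using h

lemma crossRatio_mobius (hM : M.det ≠ 0) {z₁ z₂ z₃ z₄ : ℂ} (h₁ : M 1 0 * z₁ + M 1 1 ≠ 0)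
    (h₂ : M 1 0 * z₂ + M 1 1 ≠ 0) (h₃ : M 1 0 * z₃ + M 1 1 ≠ 0) (h₄ : M 1 0 * z₄ + M 1 1 ≠ 0) :
    crossRatio (mobius M z₁) (mobius M z₂) (mobius M z₃) (mobius M z₄) =
      crossRatio z₁ z₂ z₃ z₄ := by
  rw [crossRatio, crossRatio, mobius_sub_mobius h₁ h₃, mobius_sub_mobius h₂ h₄,
    mobius_sub_mobius h₁ h₄, mobius_sub_mobius h₂ h₃, div_mul_div_comm, div_mul_div_comm]
  set t₁ := M 1 0 * z₁ + M 1 1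
  set t₂ := M 1 0 * z₂ + M 1 1
  set t₃ := M 1 0 * z₃ + M 1 1
  set t₄ := M 1 0 * z₄ + M 1 1
  rw [show t₁ * t₄ * (t₂ * t₃) = t₁ * t₃ * (t₂ * t₄) by ring,
    div_div_div_cancel_right₀ (by simp [*]), mul_mul_mul_comm,
    mul_mul_mul_comm M.det (z₁ - z₄), mul_div_mul_left _ _ (mul_ne_zero hM hM)]

lemma quadratic_eq_zero_of_three_roots {a b c z₁ z₂ z₃ : ℂ} (h₁₂ : z₁ ≠ z₂) (h₁₃ : z₁ ≠ z₃)
    (h₂₃ : z₂ ≠ z₃) (e₁ : a * z₁ ^ 2 + b * z₁ + c = 0) (e₂ : a * z₂ ^ 2 + b * z₂ + c = 0)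
    (e₃ : a * z₃ ^ 2 + b * z₃ + c = 0) :
    a = 0 ∧ b = 0 ∧ c = 0 := by
  have d₁₂ := sub_ne_zero.mpr h₁₂
  have d₁₃ := sub_ne_zero.mpr h₁₃
  have d₂₃ := sub_ne_zero.mpr h₂₃
  have ha : a = 0 := by
    have : a * ((z₁ - z₂) * (z₁ - z₃) * (z₂ - z₃)) = 0 := by
      linear_combination (z₂ - z₃) * e₁ - (z₁ - z₃) * e₂ + (z₁ - z₂) * e₃
    simpa [d₁₂, d₁₃, d₂₃] using this
  have hb : b = 0 := by
    have : b * (z₁ - z₂) = 0 := by linear_combination e₁ - e₂ - (z₁ ^ 2 - z₂ ^ 2) * ha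
    simpa [d₁₂] using this
  exact ⟨ha, hb, by linear_combination e₁ - z₁ ^ 2 * ha - z₁ * hb⟩

lemma eq_smul_one_of_mobius_fixes_three {z₁ z₂ z₃ : ℂ} (h₁₂ : z₁ ≠ z₂) (h₁₃ : z₁ ≠ z₃)
    (h₂₃ : z₂ ≠ z₃) (hz₁ : M 1 0 * z₁ + M 1 1 ≠ 0) (hz₂ : M 1 0 * z₂ + M 1 1 ≠ 0)
    (hz₃ : M 1 0 * z₃ + M 1 1 ≠ 0) (e₁ : mobius M z₁ = z₁) (e₂ : mobius M z₂ = z₂)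
    (e₃ : mobius M z₃ = z₃) :
    M = M 1 1 • 1 := by
  have fixed_iff {z : ℂ} (hz : M 1 0 * z + M 1 1 ≠ 0) (e : mobius M z = z) :
      M 1 0 * z ^ 2 + (M 1 1 - M 0 0) * z + -M 0 1 = 0 := by
    rw [mobius, div_eq_iff hz] at e
    linear_combination -e
  obtain ⟨h₁₀, h₀₀, h₀₁⟩ := quadratic_eq_zero_of_three_roots h₁₂ h₁₃ h₂₃
    (fixed_iff hz₁ e₁) (fixed_iff hz₂ e₂) (fixed_iff hz₃ e₃)
  ext i j
  fin_cases i <;> fin_cases j <;> simp [h₁₀, neg_eq_zero.mp h₀₁, sub_eq_zero.mp h₀₀]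

end Mobius

section Action

variable {g : GL (Fin 2) ℂ}

lemma pact_mk {v : Fin 2 → ℂ} (hv : v ≠ 0) :
    pact g (Projectivization.mk ℂ v hv) =
      Projectivization.mk ℂ ((g : Matrix (Fin 2) (Fin 2) ℂ).mulVec v)
        fun h ↦ g.det_ne_zero (Matrix.exists_mulVec_eq_zero_iff.mp ⟨v, hv, h⟩) := by
  obtain ⟨a, ha⟩ := Projectivization.exists_smul_eq_mk_rep ℂ v hv
  rw [pact, Projectivization.mk_eq_mk_iff]
  exact ⟨a, by rw [← ha, Matrix.mulVec_smul]⟩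

lemma pact_toP1_eq_toP1 {z w : ℂ} (h : pact g (toP1 z) = toP1 w) :
    (g : Matrix (Fin 2) (Fin 2) ℂ) 1 0 * z + (g : Matrix (Fin 2) (Fin 2) ℂ) 1 1 ≠ 0 ∧
      mobius g z = w := by
  rw [toP1, pact_mk, toP1, Projectivization.mk_eq_mk_iff] at h
  obtain ⟨a, ha⟩ := h
  have h₀ := congrFun ha 0
  have h₁ := congrFun ha 1
  simp only [Pi.smul_apply, Units.smul_def, smul_eq_mul, Matrix.mulVec, dotProduct,
    Fin.sum_univ_two, Matrix.cons_val_zero, Matrix.cons_val_one, Matrix.cons_val_fin_one,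
    mul_one] at h₀ h₁
  refine ⟨h₁ ▸ a.ne_zero, ?_⟩
  rw [mobius, ← h₀, ← h₁, mul_div_cancel_left₀ _ a.ne_zero]

lemma mobius_mem_of_mapsTo {Z : Set ℂ} (hg : Set.MapsTo (pact g) (toP1 '' Z) (toP1 '' Z))
    {z : ℂ} (hz : z ∈ Z) :
    (g : Matrix (Fin 2) (Fin 2) ℂ) 1 0 * z + (g : Matrix (Fin 2) (Fin 2) ℂ) 1 1 ≠ 0 ∧
      mobius g z ∈ Z := by
  obtain ⟨w, hw, hzw⟩ := hg (Set.mem_image_of_mem toP1 hz)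
  obtain ⟨hden, rfl⟩ := pact_toP1_eq_toP1 hzw.symm
  exact ⟨hden, hw⟩

lemma pact_eq_self_of_eq_smul_one {c : ℂ} (h : (g : Matrix (Fin 2) (Fin 2) ℂ) = c • 1)
    (x : Projectivization ℂ (Fin 2 → ℂ)) : pact g x = x := by
  induction x using Projectivization.ind with
  | h v hv =>
    rw [pact_mk]
    exact (Projectivization.mk_eq_mk_iff' ℂ _ _ _ _).mpr
      ⟨c, by rw [h, Matrix.smul_mulVec, Matrix.one_mulVec]⟩

end Action

lemma IsCritical.mobius_mem_kleinOrbit {Z : Set ℂ} {z₁ z₂ z₃ z₄ : ℂ}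
    (hc : IsCritical Z z₁ z₂ z₃ z₄) {g : GL (Fin 2) ℂ}
    (hg : Set.MapsTo (pact g) (toP1 '' Z) (toP1 '' Z)) :
    (mobius g z₁, mobius g z₂, mobius g z₃, mobius g z₄) ∈ kleinOrbit z₁ z₂ z₃ z₄ := by
  obtain ⟨h₁, h₂, h₃, h₄, hd, hcrit⟩ := hc
  obtain ⟨t₁, m₁⟩ := mobius_mem_of_mapsTo hg h₁
  obtain ⟨t₂, m₂⟩ := mobius_mem_of_mapsTo hg h₂
  obtain ⟨t₃, m₃⟩ := mobius_mem_of_mapsTo hg h₃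
  obtain ⟨t₄, m₄⟩ := mobius_mem_of_mapsTo hg h₄
  have hinj := mobius_injOn (g.det_ne_zero)
  have hd' : [mobius g z₁, mobius g z₂, mobius g z₃, mobius g z₄].Pairwise (· ≠ ·) := by
    refine List.pairwise_map.mpr (hd.imp_of_mem fun ha hb hab ↦ hab ∘ hinj ?_ ?_)
    all_goals simp only [List.mem_cons, List.not_mem_nil, or_false] at ha hb
    · rcases ha with rfl | rfl | rfl | rfl <;> assumption
    · rcases hb with rfl | rfl | rfl | rfl <;> assumption
  exact (hcrit _ _ _ _ m₁ m₂ m₃ m₄ hd').mp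
    (crossRatio_mobius (g.det_ne_zero) t₁ t₂ t₃ t₄)

theorem stmt9_general (Z : Set ℂ)
    (z₁ z₂ z₃ z₄ z₅ : ℂ) (hd : [z₁, z₂, z₃, z₄, z₅].Pairwise (· ≠ ·))
    (hc1 : IsCritical Z z₁ z₂ z₃ z₄) (hc2 : IsCritical Z z₁ z₂ z₃ z₅)
    (g : GL (Fin 2) ℂ) (hg : Set.BijOn (pact g) (toP1 '' Z) (toP1 '' Z)) :
    ∀ x, pact g x = x := by
  obtain ⟨e₁, e₂, e₃⟩ := eq_of_mem_kleinOrbit_of_mem_kleinOrbit hd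
    (hc1.mobius_mem_kleinOrbit hg.mapsTo) (hc2.mobius_mem_kleinOrbit hg.mapsTo)
  simp only [List.pairwise_cons, List.mem_cons, List.not_mem_nil, or_false, forall_eq_or_imp,
    forall_eq] at hd
  obtain ⟨⟨h₁₂, h₁₃, -⟩, ⟨h₂₃, -⟩, -⟩ := hd
  obtain ⟨m₁, m₂, m₃, -⟩ := hc1
  have hden {z : ℂ} (hz : z ∈ Z) := (mobius_mem_of_mapsTo hg.mapsTo hz).1
  exact pact_eq_self_of_eq_smul_one <| eq_smul_one_of_mobius_fixes_three h₁₂ h₁₃ h₂₃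
    (hden m₁) (hden m₂) (hden m₃) e₁ e₂ e₃

theorem stmt9 (Z : Set ℂ) (hZ : 5 ≤ Z.ncard)
    (z₁ z₂ z₃ z₄ z₅ : ℂ) (hd : [z₁, z₂, z₃, z₄, z₅].Pairwise (· ≠ ·))
    (hmem : z₅ ∈ Z)
    (hc1 : IsCritical Z z₁ z₂ z₃ z₄) (hc2 : IsCritical Z z₁ z₂ z₃ z₅)
    (g : GL (Fin 2) ℂ) (hg : Set.BijOn (pact g) (toP1 '' Z) (toP1 '' Z)) :
    ∀ x, pact g x = x :=
  stmt9_general Z z₁ z₂ z₃ z₄ z₅ hd hc1 hc2 g hg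
end
end

section
/- For n ≥ 3, the image in PGL₂(ℂ) of the stabilizer in GL₂(ℂ) of the polynomial x^n + y^n is a dihedral group of order 2n, generated by the images of diag(1, ζ_n) (ζ_n a primitive n-th root of unity) and the swap matrix [[0,1],[1,0]]. -/
open MvPolynomial

noncomputable section

/-- `PGL₂(ℂ)`, the quotient of `GL₂(ℂ)` by its center. -/
abbrev PGL2 := GL (Fin 2) ℂ ⧸ Subgroup.center (GL (Fin 2) ℂ)

/-- The canonical projection `GL₂(ℂ) → PGL₂(ℂ)`. -/
def projPGL : GL (Fin 2) ℂ →* PGL2 := QuotientGroup.mk' _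

/-! ### auxiliary lemmas -/

lemma aux_act_act (M N : Matrix (Fin 2) (Fin 2) ℂ) (p : MvPolynomial (Fin 2) ℂ) :
    act M (act N p) = act (N * M) p := by
  unfold act
  rw [bind₁_bind₁]
  have : (fun i : Fin 2 => (bind₁ fun i => ∑ j : Fin 2, M i j • X j) (∑ j : Fin 2, N i j • (X j : MvPolynomial (Fin 2) ℂ)))
      = fun i => ∑ j : Fin 2, (N * M) i j • (X j : MvPolynomial (Fin 2) ℂ) := by
    funext i
    simp only [Fin.sum_univ_two, map_add, map_smul, bind₁_X_right, Matrix.mul_apply, add_smul,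
      smul_smul, smul_add]
    module
  rw [this]

lemma aux_act_one (p : MvPolynomial (Fin 2) ℂ) : act 1 p = p := by
  unfold act
  have : (fun i => ∑ j, (1 : Matrix (Fin 2) (Fin 2) ℂ) i j • X j) = (X : Fin 2 → MvPolynomial (Fin 2) ℂ) := by
    funext i
    fin_cases i <;> simp [Fin.sum_univ_two, Matrix.one_apply]
  rw [this, bind₁_X_left]
  rfl

lemma aux_act_p (M : Matrix (Fin 2) (Fin 2) ℂ) (n : ℕ) :
    act M ((X 0 : MvPolynomial (Fin 2) ℂ) ^ n + X 1 ^ n)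
      = (M 0 0 • X 0 + M 0 1 • X 1) ^ n + (M 1 0 • X 0 + M 1 1 • X 1) ^ n := by
  simp [act, Fin.sum_univ_two]

/-- The stabilizer as a subgroup. -/
def stabSub (p : MvPolynomial (Fin 2) ℂ) : Subgroup (GL (Fin 2) ℂ) where
  carrier := Stab p
  one_mem' := by
    show act ((1 : GL (Fin 2) ℂ) : Matrix (Fin 2) (Fin 2) ℂ) p = p
    rw [Units.val_one, aux_act_one]
  mul_mem' := by
    intro a b ha hb
    show act ((a * b : GL (Fin 2) ℂ) : Matrix (Fin 2) (Fin 2) ℂ) p = p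
    rw [Units.val_mul, ← aux_act_act]
    rw [show act (↑a) p = p from ha, show act (↑b) p = p from hb]
  inv_mem' := by
    intro a ha
    show act ((↑(a⁻¹) : Matrix (Fin 2) (Fin 2) ℂ)) p = p
    have h1 := aux_act_act ((↑(a⁻¹) : Matrix (Fin 2) (Fin 2) ℂ)) ((↑a : Matrix (Fin 2) (Fin 2) ℂ)) p
    have h2 : ((↑a : Matrix (Fin 2) (Fin 2) ℂ) * (↑(a⁻¹) : Matrix (Fin 2) (Fin 2) ℂ)) = 1 := by
      rw [← Units.val_mul, mul_inv_cancel, Units.val_one]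
    rw [show act (↑a) p = p from ha, h2, aux_act_one] at h1
    exact h1

lemma aux_coeff_linear_pow (a b : ℂ) (n k : ℕ) (hk : k ≤ n) :
    ((Polynomial.C a * Polynomial.X + Polynomial.C b) ^ n).coeff k
      = n.choose k * (a ^ k * b ^ (n - k)) := by
  rw [add_pow, Polynomial.finset_sum_coeff]
  have h1 : ∀ m ∈ Finset.range (n+1),
      ((Polynomial.C a * Polynomial.X) ^ m * Polynomial.C b ^ (n - m)
          * (n.choose m : Polynomial ℂ)).coeff k
        = if k = m then (n.choose m : ℂ) * (a ^ m * b ^ (n - m)) else 0 := by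
    intro m _
    have : (Polynomial.C a * Polynomial.X) ^ m * Polynomial.C b ^ (n - m)
          * (n.choose m : Polynomial ℂ)
        = Polynomial.C ((n.choose m : ℂ) * (a ^ m * b ^ (n - m))) * Polynomial.X ^ m := by
      rw [mul_pow, ← Polynomial.C_pow, ← Polynomial.C_pow, ← Polynomial.C_eq_natCast,
        Polynomial.C_mul, Polynomial.C_mul]
      ring
    rw [this, Polynomial.coeff_C_mul, Polynomial.coeff_X_pow]
    split <;> simp
  rw [Finset.sum_congr rfl h1, Finset.sum_ite_eq (Finset.range (n+1)) k]
  simp [Nat.lt_succ_of_le hk]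

lemma aux_key_eqs (n : ℕ) (hn : 3 ≤ n) (a b c e : ℂ)
    (h : (Polynomial.C a * Polynomial.X + Polynomial.C b) ^ n
        + (Polynomial.C c * Polynomial.X + Polynomial.C e) ^ n
        = (Polynomial.X : Polynomial ℂ) ^ n + 1) :
    (b = 0 ∧ c = 0 ∧ a ^ n = 1 ∧ e ^ n = 1) ∨
    (a = 0 ∧ e = 0 ∧ b ^ n = 1 ∧ c ^ n = 1) := by
  have hE : ∀ k ≤ n, (n.choose k : ℂ) * (a ^ k * b ^ (n - k) + c ^ k * e ^ (n - k))
      = (if k = n then 1 else 0) + (if k = 0 then 1 else 0) := by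
    intro k hk
    have := congrArg (fun p => Polynomial.coeff p k) h
    simp only [Polynomial.coeff_add, Polynomial.coeff_X_pow, Polynomial.coeff_one] at this
    rw [aux_coeff_linear_pow a b n k hk, aux_coeff_linear_pow c e n k hk] at this
    rw [mul_add]
    exact this
  have hchoose : ∀ k ≤ n, (n.choose k : ℂ) ≠ 0 := fun k hk => by
    exact_mod_cast Nat.cast_ne_zero.mpr (Nat.choose_pos hk).ne'
  have hmid : ∀ k, 0 < k → k < n → a ^ k * b ^ (n - k) + c ^ k * e ^ (n - k) = 0 := by
    intro k hk0 hkn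
    have := hE k hkn.le
    rw [if_neg hkn.ne, if_neg hk0.ne'] at this
    simpa using (mul_eq_zero.mp (by rw [this]; ring)).resolve_left (hchoose k hkn.le)
  have htop : a ^ n + c ^ n = 1 := by
    have := hE n le_rfl
    have hn0 : n ≠ 0 := by omega
    rw [if_pos rfl, if_neg hn0, Nat.choose_self] at this
    simpa using this
  have hbot : b ^ n + e ^ n = 1 := by
    have := hE 0 (Nat.zero_le n)
    have h0n : (0 : ℕ) ≠ n := by omega
    rw [if_neg h0n, if_pos rfl] at this
    simpa [Nat.choose_zero_right] using this
  have key : ∀ a b c e : ℂ, (∀ k, 0 < k → k < n → a ^ k * b ^ (n - k) + c ^ k * e ^ (n - k) = 0) →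
      b ^ n + e ^ n = 1 → a = 0 ∨ b = 0 := by
    intro a b c e hmid hbot
    by_contra hab
    push_neg at hab
    obtain ⟨ha, hb⟩ := hab
    have E1 := hmid 1 one_pos (by omega)
    have E2 := hmid 2 two_pos (by omega)
    rw [pow_one] at E1
    have hpowb : b ^ (n-1) * b ^ (n-1) = b ^ (n-2) * b ^ n := by
      rw [← pow_add, ← pow_add]; congr 1; omega
    have hpowe : e ^ (n-1) * e ^ (n-1) = e ^ (n-2) * e ^ n := by
      rw [← pow_add, ← pow_add]; congr 1; omega
    have step : a ^ 2 * b ^ (n-2) * (b ^ n + e ^ n) = 0 := by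
      linear_combination (a * b ^ (n-1) - c * e ^ (n-1)) * E1 + e ^ n * E2
        - a ^ 2 * hpowb + c ^ 2 * hpowe
    have hne : a ^ 2 * b ^ (n-2) ≠ 0 :=
      mul_ne_zero (pow_ne_zero _ ha) (pow_ne_zero _ hb)
    have : b ^ n + e ^ n = 0 := (mul_eq_zero.mp step).resolve_left hne
    rw [this] at hbot
    exact one_ne_zero hbot.symm
  have hab : a = 0 ∨ b = 0 := key a b c e hmid hbot
  have hce : c = 0 ∨ e = 0 := by
    refine key c e a b (fun k hk0 hkn => ?_) (by linear_combination hbot)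
    linear_combination hmid k hk0 hkn
  have hn0 : n ≠ 0 := by omega
  rcases hab with ha | hb
  · rcases hce with hc | he
    · exfalso
      simp [ha, hc, zero_pow hn0] at htop
    · right
      refine ⟨ha, he, ?_, ?_⟩
      · rw [he, zero_pow hn0] at hbot; linear_combination hbot
      · rw [ha, zero_pow hn0] at htop; linear_combination htop
  · rcases hce with hc | he
    · left
      refine ⟨hb, hc, ?_, ?_⟩
      · rw [hc, zero_pow hn0] at htop; linear_combination htop
      · rw [hb, zero_pow hn0] at hbot; linear_combination hbot
    · exfalso
      simp [hb, he, zero_pow hn0] at hbot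

lemma aux_to_onevar (M : Matrix (Fin 2) (Fin 2) ℂ) (n : ℕ)
    (h : act M ((X 0 : MvPolynomial (Fin 2) ℂ) ^ n + X 1 ^ n) = X 0 ^ n + X 1 ^ n) :
    (Polynomial.C (M 0 0) * Polynomial.X + Polynomial.C (M 0 1)) ^ n
      + (Polynomial.C (M 1 0) * Polynomial.X + Polynomial.C (M 1 1)) ^ n
      = (Polynomial.X : Polynomial ℂ) ^ n + 1 := by
  have h2 := congrArg (aeval (R := ℂ) ![Polynomial.X, (1 : Polynomial ℂ)]) h
  rw [aux_act_p] at h2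
  simpa [Polynomial.smul_eq_C_mul, one_pow] using h2

lemma aux_central_of_scalar (u : ℂ) (z : GL (Fin 2) ℂ)
    (hz : (z : Matrix (Fin 2) (Fin 2) ℂ) = u • 1) :
    z ∈ Subgroup.center (GL (Fin 2) ℂ) := by
  rw [Subgroup.mem_center_iff]
  intro g
  apply Units.ext
  rw [Units.val_mul, Units.val_mul, hz, Matrix.mul_smul, Matrix.smul_mul, mul_one, one_mul]

lemma aux_proj_eq_of_smul (g h : GL (Fin 2) ℂ) (u : ℂ)
    (hu : (↑g : Matrix (Fin 2) (Fin 2) ℂ) = u • (↑h : Matrix (Fin 2) (Fin 2) ℂ)) :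
    projPGL g = projPGL h := by
  have hz : g * h⁻¹ ∈ Subgroup.center (GL (Fin 2) ℂ) := by
    apply aux_central_of_scalar u
    rw [Units.val_mul, hu, Matrix.smul_mul, ← Units.val_mul, mul_inv_cancel, Units.val_one]
  have h1 : projPGL (g * h⁻¹) = 1 := (QuotientGroup.eq_one_iff _).mpr hz
  calc projPGL g = projPGL ((g * h⁻¹) * h) := by group
    _ = projPGL (g * h⁻¹) * projPGL h := map_mul _ _ _
    _ = projPGL h := by rw [h1, one_mul]

lemma aux_proj_eq_one_iff (g : GL (Fin 2) ℂ) :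
    projPGL g = 1 ↔ g ∈ Subgroup.center (GL (Fin 2) ℂ) :=
  QuotientGroup.eq_one_iff g

theorem stmt13 (n : ℕ) (hn : 3 ≤ n) (ζ : ℂ) (hζ : IsPrimitiveRoot ζ n)
    (d s : GL (Fin 2) ℂ)
    (hd : (d : Matrix (Fin 2) (Fin 2) ℂ) = !![1, 0; 0, ζ])
    (hs : (s : Matrix (Fin 2) (Fin 2) ℂ) = !![0, 1; 1, 0]) :
    projPGL '' Stab ((X 0 : MvPolynomial (Fin 2) ℂ) ^ n + X 1 ^ n) =
      (Subgroup.closure {projPGL d, projPGL s} : Set PGL2) ∧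
    Nat.card (Subgroup.closure {projPGL d, projPGL s}) = 2 * n ∧
    Nonempty ((Subgroup.closure {projPGL d, projPGL s}) ≃* DihedralGroup n) := by
  have hnz : NeZero n := ⟨by omega⟩
  have hζn : ζ ^ n = 1 := hζ.pow_eq_one
  set p : MvPolynomial (Fin 2) ℂ := X 0 ^ n + X 1 ^ n with hp
  set D := projPGL d with hD
  set S := projPGL s with hS
  set H := Subgroup.closure {D, S} with hH
  -- powers of d
  have dpow : ∀ k : ℕ, ((d ^ k : GL (Fin 2) ℂ) : Matrix (Fin 2) (Fin 2) ℂ) = !![1, 0; 0, ζ ^ k] := by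
    intro k
    induction k with
    | zero => simp [Matrix.one_fin_two]
    | succ k ih =>
        rw [pow_succ, Units.val_mul, ih, hd, Matrix.mul_fin_two]
        norm_num [pow_succ]
  -- d and s stabilize p
  have hdStab : d ∈ Stab p := by
    show act (↑d) p = p
    rw [hp, aux_act_p, hd]
    norm_num [smul_pow, hζn]
  have hsStab : s ∈ Stab p := by
    show act (↑s) p = p
    rw [hp, aux_act_p, hs]
    norm_num [add_comm]
  -- s * s = 1
  have hss : s * s = 1 := by
    apply Units.ext
    rw [Units.val_mul, hs, Matrix.mul_fin_two, Units.val_one, Matrix.one_fin_two]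
    norm_num
  have hSS : S * S = 1 := by rw [hS, ← map_mul, hss, map_one]
  -- D ^ n = 1
  have hDn : D ^ n = 1 := by
    rw [hD, ← map_pow]
    apply (aux_proj_eq_one_iff _).mpr
    apply aux_central_of_scalar 1
    rw [dpow, hζn, Matrix.one_fin_two, one_smul]
  -- if ζ^k ≠ 1 then d^k not central ; central characterization
  have hcentral_pow : ∀ k : ℕ, (d ^ k ∈ Subgroup.center (GL (Fin 2) ℂ)) → ζ ^ k = 1 := by
    intro k hk
    rw [Subgroup.mem_center_iff] at hk
    have := hk s
    have hm := congrArg (fun u : GL (Fin 2) ℂ => (u : Matrix (Fin 2) (Fin 2) ℂ) 0 1) this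
    simp only [Units.val_mul, dpow, hs, Matrix.mul_fin_two] at hm
    simpa using hm
  -- S * D^k * S = (D^k)⁻¹  (projective relation)
  have hSDS : S * D * S = D⁻¹ := by
    have h1 : projPGL (s * d * s * d) = 1 := by
      apply (aux_proj_eq_one_iff _).mpr
      apply aux_central_of_scalar ζ
      rw [Units.val_mul, Units.val_mul, Units.val_mul, hs, hd, Matrix.mul_fin_two,
        Matrix.mul_fin_two, Matrix.mul_fin_two]
      norm_num [Matrix.one_fin_two, Matrix.smul_of]
      ext i j
      fin_cases i <;> fin_cases j <;> simp
    have : S * D * S * D = 1 := by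
      rw [hS, hD, ← map_mul, ← map_mul, ← map_mul, h1]
    calc S * D * S = (S * D * S * D) * D⁻¹ := by group
      _ = D⁻¹ := by rw [this, one_mul]
  -- ψ : ZMod n → PGL2
  set ψ : ZMod n → PGL2 := fun i => D ^ i.val with hψ
  have hDpow_eq : ∀ a b : ℕ, a ≡ b [MOD n] → D ^ a = D ^ b := by
    intro a b hab
    have hdvd : orderOf D ∣ n := orderOf_dvd_of_pow_eq_one hDn
    exact pow_eq_pow_iff_modEq.mpr (hab.of_dvd hdvd)
  have hψadd : ∀ i j : ZMod n, ψ (i + j) = ψ i * ψ j := by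
    intro i j
    rw [hψ]
    show D ^ (i + j).val = D ^ i.val * D ^ j.val
    rw [← pow_add]
    apply hDpow_eq
    rw [ZMod.val_add]
    exact Nat.mod_modEq _ _
  have hψ0 : ψ 0 = 1 := by
    show D ^ (0 : ZMod n).val = 1
    rw [ZMod.val_zero, pow_zero]
  have hψneg : ∀ i : ZMod n, ψ (-i) = (ψ i)⁻¹ := by
    intro i
    have : ψ (-i) * ψ i = 1 := by rw [← hψadd, neg_add_cancel, hψ0]
    exact eq_inv_of_mul_eq_one_left this
  have hconj : ∀ i : ZMod n, S * ψ i * S = (ψ i)⁻¹ := by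
    intro i
    show S * D ^ i.val * S = (D ^ i.val)⁻¹
    have hSinv : S⁻¹ = S := by
      rw [inv_eq_iff_mul_eq_one]; exact hSS
    calc S * D ^ i.val * S = S * D ^ i.val * S⁻¹ := by rw [hSinv]
      _ = (S * D * S⁻¹) ^ i.val := (conj_pow).symm
      _ = (D⁻¹) ^ i.val := by rw [hSinv, hSDS]
      _ = (D ^ i.val)⁻¹ := inv_pow _ _
  have hcomm : ∀ i : ZMod n, ψ i * S = S * ψ (-i) := by
    intro i
    rw [hψneg]
    have := hconj i
    calc ψ i * S = S * (S * ψ i * S) := by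
          rw [← mul_assoc, ← mul_assoc, hSS, one_mul]
      _ = S * (ψ i)⁻¹ := by rw [this]
  -- the homomorphism F
  set Ffun : DihedralGroup n → PGL2 := (fun x =>
    match x with
    | DihedralGroup.r i => ψ i
    | DihedralGroup.sr i => S * ψ i) with hFfun
  have hFmul : ∀ x y : DihedralGroup n, Ffun (x * y) = Ffun x * Ffun y := by
    intro x y
    rcases x with i | i <;> rcases y with j | j
    · show ψ (i + j) = ψ i * ψ j
      exact hψadd i j
    · show S * ψ (j - i) = ψ i * (S * ψ j)
      rw [show j - i = -i + j from by ring, ← mul_assoc, hcomm i, mul_assoc, ← hψadd]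
    · show S * ψ (i + j) = S * ψ i * ψ j
      rw [mul_assoc, hψadd]
    · show ψ (j - i) = (S * ψ i) * (S * ψ j)
      symm
      calc (S * ψ i) * (S * ψ j) = S * (ψ i * S) * ψ j := by group
        _ = S * (S * ψ (-i)) * ψ j := by rw [hcomm]
        _ = (S * S) * (ψ (-i) * ψ j) := by group
        _ = ψ (-i + j) := by rw [hSS, one_mul, hψadd]
        _ = ψ (j - i) := by rw [show -i + j = j - i from by ring]
  set F : DihedralGroup n →* PGL2 :=
    { toFun := Ffun
      map_one' := by
        rw [DihedralGroup.one_def]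
        show ψ 0 = 1
        exact hψ0
      map_mul' := hFmul } with hF
  -- injectivity
  have hFr : ∀ i : ZMod n, F (DihedralGroup.r i) = ψ i := fun i => rfl
  have hFsr : ∀ i : ZMod n, F (DihedralGroup.sr i) = S * ψ i := fun i => rfl
  have hζ1 : ζ ≠ 1 := by
    intro h1
    have h2 := hζ.dvd_of_pow_eq_one 1 (by rw [h1, one_pow])
    have := Nat.le_of_dvd one_pos h2
    omega
  have hFinj : Function.Injective F := by
    rw [injective_iff_map_eq_one]
    intro x hx
    rcases x with i | i
    · rw [hFr] at hx
      have hcen : d ^ i.val ∈ Subgroup.center (GL (Fin 2) ℂ) := by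
        apply (aux_proj_eq_one_iff _).mp
        rw [map_pow, ← hD]
        exact hx
      have := hcentral_pow i.val hcen
      have hdvd := hζ.dvd_of_pow_eq_one i.val this
      have hlt : i.val < n := ZMod.val_lt i
      have : i.val = 0 := Nat.eq_zero_of_dvd_of_lt hdvd hlt
      rw [DihedralGroup.one_def]
      congr 1
      exact ((ZMod.val_eq_zero i).mp this)
    · exfalso
      rw [hFsr] at hx
      have hcen : s * d ^ i.val ∈ Subgroup.center (GL (Fin 2) ℂ) := by
        apply (aux_proj_eq_one_iff _).mp
        rw [map_mul, map_pow, ← hD, ← hS]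
        exact hx
      rw [Subgroup.mem_center_iff] at hcen
      have := hcen d
      have hm := congrArg (fun u : GL (Fin 2) ℂ => (u : Matrix (Fin 2) (Fin 2) ℂ) 1 0) this
      simp only [Units.val_mul, dpow, hs, hd, Matrix.mul_fin_two] at hm
      norm_num at hm
      exact hζ1 hm
  -- range = H
  have hDmem : D ∈ H := Subgroup.subset_closure (by left; rfl)
  have hSmem : S ∈ H := Subgroup.subset_closure (by right; rfl)
  have hrange : F.range = H := by
    apply le_antisymm
    · rintro x ⟨y, rfl⟩
      rcases y with i | i
      · rw [hFr]
        exact pow_mem hDmem _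
      · rw [hFsr]
        exact mul_mem hSmem (pow_mem hDmem _)
    · rw [hH]
      apply Subgroup.closure_le _ |>.mpr
      rintro x (rfl | rfl)
      · refine ⟨DihedralGroup.r 1, ?_⟩
        rw [hFr]
        show D ^ (1 : ZMod n).val = D
        have : Fact (1 < n) := ⟨by omega⟩
        rw [ZMod.val_one, pow_one]
      · refine ⟨DihedralGroup.sr 0, ?_⟩
        rw [hFsr, hψ0, mul_one]
  -- conclusion: the equivalence
  have equiv : DihedralGroup n ≃* H :=
    (MonoidHom.ofInjective hFinj).trans (MulEquiv.subgroupCongr hrange)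
  refine ⟨?_, ?_, ⟨equiv.symm⟩⟩
  · -- set equality
    apply Set.eq_of_subset_of_subset
    · rintro x ⟨g, hg, rfl⟩
      have hone := aux_to_onevar (↑g) n hg
      rcases aux_key_eqs n hn _ _ _ _ hone with ⟨hb, hc, han, hen⟩ | ⟨ha, he, hbn, hcn⟩
      · -- diagonal
        set a := (↑g : Matrix (Fin 2) (Fin 2) ℂ) 0 0 with ha'
        set e := (↑g : Matrix (Fin 2) (Fin 2) ℂ) 1 1 with he'
        have ha0 : a ≠ 0 := by
          intro h0
          rw [h0, zero_pow (by omega : n ≠ 0)] at han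
          exact zero_ne_one han
        have hea : (e / a) ^ n = 1 := by
          rw [div_pow, han, hen]
          simp
        obtain ⟨k, hk, hζk⟩ := hζ.eq_pow_of_pow_eq_one hea
        have hproj : projPGL g = projPGL (d ^ k) := by
          apply aux_proj_eq_of_smul g (d ^ k) a
          rw [dpow, Matrix.eta_fin_two (↑g : Matrix (Fin 2) (Fin 2) ℂ), ← ha', ← he', hb, hc]
          rw [hζk]
          have : a * (e / a) = e := by field_simp
          ext i j
          fin_cases i <;> fin_cases j <;> simp [Matrix.smul_of, this]
        rw [hproj, map_pow, ← hD]
        exact pow_mem hDmem k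
      · -- antidiagonal
        set b := (↑g : Matrix (Fin 2) (Fin 2) ℂ) 0 1 with hb'
        set c := (↑g : Matrix (Fin 2) (Fin 2) ℂ) 1 0 with hc'
        have hb0 : b ≠ 0 := by
          intro h0
          rw [h0, zero_pow (by omega : n ≠ 0)] at hbn
          exact zero_ne_one hbn
        have hcb : (c / b) ^ n = 1 := by
          rw [div_pow, hbn, hcn]
          simp
        obtain ⟨k, hk, hζk⟩ := hζ.eq_pow_of_pow_eq_one hcb
        have hproj : projPGL g = projPGL (d ^ k * s) := by
          apply aux_proj_eq_of_smul g (d ^ k * s) b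
          rw [Units.val_mul, dpow, hs, Matrix.mul_fin_two,
            Matrix.eta_fin_two (↑g : Matrix (Fin 2) (Fin 2) ℂ), ← hb', ← hc', ha, he, hζk]
          have : b * (c / b) = c := by field_simp
          ext i j
          fin_cases i <;> fin_cases j <;> simp [Matrix.smul_of, this, mul_comm]
        rw [hproj, map_mul, map_pow, ← hD, ← hS]
        exact mul_mem (pow_mem hDmem k) hSmem
    · -- closure ⊆ image
      have hle : H ≤ Subgroup.map projPGL (stabSub p) := by
        rw [hH]
        apply Subgroup.closure_le _ |>.mpr
        rintro x (rfl | rfl)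
        · exact ⟨d, hdStab, rfl⟩
        · exact ⟨s, hsStab, rfl⟩
      intro x hx
      obtain ⟨g, hg, rfl⟩ := hle hx
      exact ⟨g, hg, rfl⟩
  · -- cardinality
    have : Nat.card H = Nat.card (DihedralGroup n) := Nat.card_congr equiv.symm.toEquiv
    rw [this, Nat.card_eq_fintype_card, DihedralGroup.card]
end
end
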